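/- Fix l, d, s ∈ ℕ with ⌊l/2⌋ ≤ d ≤ l, and set P^l_{d,s} := {P ∈ ℂ[X₀,X₁]_l ∖ {0} : dim_ℂ C_P^d = s} and P^l_r := {P ∈ ℂ[X₀,X₁]_l ∖ {0} : d₁(P) = r}. Then: P^l_{d,s} = P^l_{l−d+1−s} if 0 < s ≤ l − d; P^l_{d,s} = ⋃_{l−d+1 ≤ r ≤ ⌊l/2⌋+1} P^l_r if s = 0; and P^l_{d,s} = ∅ if s > l − d. -/

import Mathlib

/-!
Common definitions: the apolar action of `ℂ[X₀,X₁]` on itself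
(`Q • P := Q(∂/∂X₀, ∂/∂X₁)(P)`), the apolar ideal `Ann(P)` and its homogeneous
components, the cokernel `C_P^d` of `Q ↦ Q • P : ℂ[X₀,X₁]_d → ℂ[X₀,X₁]_{l-d}`,
the invariant `d₁(P)` and the Waring rank.
-/

open MvPolynomial

noncomputable section

/-- The partial derivative `∂/∂Xᵢ` as a `ℂ`-linear endomorphism of `ℂ[X₀,X₁]`. -/
def pd (i : Fin 2) : Module.End ℂ (MvPolynomial (Fin 2) ℂ) := (pderiv (R := ℂ) i).toLinearMap

lemma pd_comm : Commute (pd 0) (pd 1) := by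
  apply LinearMap.ext
  intro P
  induction P using MvPolynomial.induction_on' with
  | monomial s a =>
      simp [pd, Module.End.mul_apply, pderiv_monomial]
      rw [tsub_right_comm, mul_right_comm]
  | add p q hp hq => simp_all [Module.End.mul_apply, map_add]

/-- The endomorphism `∂₀^{m 0} ∘ ∂₁^{m 1}` of `ℂ[X₀,X₁]`, as a monoid homomorphism in the
exponent `m`. -/
def derivMonomialHom :
    Multiplicative (Fin 2 →₀ ℕ) →* Module.End ℂ (MvPolynomial (Fin 2) ℂ) where
  toFun m := pd 0 ^ (Multiplicative.toAdd m 0) * pd 1 ^ (Multiplicative.toAdd m 1)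
  map_one' := by simp
  map_mul' a b := by
    simp only [toAdd_mul, Finsupp.add_apply, pow_add]
    exact (Commute.pow_pow pd_comm _ _).mul_mul_mul_comm _ _

/-- The representation of `ℂ[X₀,X₁]` by constant-coefficient differential operators:
`diffOp Q = Q(∂/∂X₀, ∂/∂X₁)`.  It is the morphism of `ℂ`-algebras sending `X i` to
`∂/∂Xᵢ`. -/
def diffOp : MvPolynomial (Fin 2) ℂ →ₐ[ℂ] Module.End ℂ (MvPolynomial (Fin 2) ℂ) :=
  AddMonoidAlgebra.lift ℂ _ (Fin 2 →₀ ℕ) derivMonomialHom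

/-- The apolar action `Q • P := Q(∂/∂X₀, ∂/∂X₁)(P)`. -/
def apolar (Q P : MvPolynomial (Fin 2) ℂ) : MvPolynomial (Fin 2) ℂ := diffOp Q P

/-- For fixed `P`, the map `Q ↦ Q • P` is `ℂ`-linear in `Q`. -/
def apolarLM (P : MvPolynomial (Fin 2) ℂ) :
    MvPolynomial (Fin 2) ℂ →ₗ[ℂ] MvPolynomial (Fin 2) ℂ :=
  (LinearMap.applyₗ P).comp diffOp.toLinearMap

lemma apolarLM_apply (P Q : MvPolynomial (Fin 2) ℂ) : apolarLM P Q = apolar Q P := rfl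

/-- The apolar ideal `Ann(P) = {Q | Q • P = 0}`. -/
def annIdeal (P : MvPolynomial (Fin 2) ℂ) : Ideal (MvPolynomial (Fin 2) ℂ) where
  carrier := {Q | apolar Q P = 0}
  zero_mem' := by simp [apolar]
  add_mem' := by
    intro a b ha hb
    simp only [Set.mem_setOf_eq, apolar, map_add, LinearMap.add_apply] at *
    rw [ha, hb, add_zero]
  smul_mem' := by
    intro c Q hQ
    simp only [Set.mem_setOf_eq, smul_eq_mul, apolar, map_mul, Module.End.mul_apply] at *
    rw [hQ, map_zero]

/-- The degree-`d` homogeneous component `Ann(P)_d` of the apolar ideal of `P`. -/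
def annComp (P : MvPolynomial (Fin 2) ℂ) (d : ℕ) :
    Submodule ℂ (MvPolynomial (Fin 2) ℂ) :=
  homogeneousSubmodule (Fin 2) ℂ d ⊓ LinearMap.ker (apolarLM P)

/-- The image of `ℂ[X₀,X₁]_d` under `Q ↦ Q • P`, viewed as a subspace of `ℂ[X₀,X₁]_{l-d}`
(for `P` homogeneous of degree `l` and `d ≤ l` the image is indeed contained in
`ℂ[X₀,X₁]_{l-d}`). -/
def apolarImage (P : MvPolynomial (Fin 2) ℂ) (l d : ℕ) :
    Submodule ℂ (homogeneousSubmodule (Fin 2) ℂ (l - d)) :=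
  Submodule.comap (homogeneousSubmodule (Fin 2) ℂ (l - d)).subtype
    (Submodule.map (apolarLM P) (homogeneousSubmodule (Fin 2) ℂ d))

/-- `C_P^d`: the cokernel of the `ℂ`-linear map `ℂ[X₀,X₁]_d → ℂ[X₀,X₁]_{l-d}`, `Q ↦ Q • P`. -/
abbrev ApolarCoker (P : MvPolynomial (Fin 2) ℂ) (l d : ℕ) :=
  (homogeneousSubmodule (Fin 2) ℂ (l - d)) ⧸ apolarImage P l d

/-- `d₁(P)`: the minimal degree of a nonzero homogeneous polynomial in `Ann(P)`. -/
def d1 (P : MvPolynomial (Fin 2) ℂ) : ℕ :=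
  sInf {d | ∃ Q : MvPolynomial (Fin 2) ℂ, Q ≠ 0 ∧ Q.IsHomogeneous d ∧ apolar Q P = 0}

/-- The Waring rank of a binary form `P` of degree `l`: the least `r` such that `P` is a sum
of `r` `l`-th powers of linear forms. -/
def waringRank (l : ℕ) (P : MvPolynomial (Fin 2) ℂ) : ℕ :=
  sInf {r | ∃ lam : Fin r → MvPolynomial (Fin 2) ℂ,
    (∀ i, (lam i).IsHomogeneous 1) ∧ P = ∑ i, lam i ^ l}

end

/-!
Write `r_e` for the rank of the catalecticant `Q ↦ Q • P` from `ℂ[X₀,X₁]_e` to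
`ℂ[X₀,X₁]_{l-e}`, so that `dim C_P^d = l - d + 1 - r_d`. Since `(R, S) ↦ (R • S)(0)` is
nondegenerate on forms of equal degree, the left and right kernels of the pairing
`(Q, R) ↦ ((Q R) • P)(0)` on `ℂ[X₀,X₁]_d × ℂ[X₀,X₁]_{l-d}` are the kernels of the two
catalecticants, which gives `r_d = r_{l-d}`. For `2e ≤ l + 1`
one has `r_e = min (e + 1) d₁(P)`: below `d₁(P)` the catalecticant is injective; from `d₁(P)` on
its kernel contains the multiples of a nonzero element of `Ann(P)_{d₁(P)}`, so `r_e ≤ d₁(P)`; and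
`r` does not decrease up to the middle degree, because for a suitable `a` the operator
`a ∂₀ - ∂₁`, whose kernel on forms of degree `l - e` is the line through `(X₀ + a X₁)^(l-e)`,
is injective on the image of the degree-`e` catalecticant and maps it into that of degree
`e + 1`. Hence `dim C_P^d = l - d + 1 - d₁(P)` for `⌊l/2⌋ ≤ d ≤ l`, where
`1 ≤ d₁(P) ≤ ⌊l/2⌋ + 1`.
-/

open Module

local notation "𝓗" => homogeneousSubmodule (Fin 2) ℂ

lemma Finsupp.degree_fin_two {M : Type*} [AddCommMonoid M] (m : Fin 2 →₀ M) :
    m.degree = m 0 + m 1 := by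
  rw [Finsupp.degree_eq_sum, Fin.sum_univ_two]

lemma MvPolynomial.IsHomogeneous.degree_eq {σ R : Type*} [CommSemiring R] {φ : MvPolynomial σ R}
    {n : ℕ} (hφ : φ.IsHomogeneous n) {d : σ →₀ ℕ} (hd : coeff d φ ≠ 0) : d.degree = n := by
  rw [Finsupp.degree_eq_weight_one]; exact hφ hd

instance {σ R : Type*} [CommSemiring R] [Finite σ] (n : ℕ) :
    Module.Finite R (homogeneousSubmodule σ R n) :=
  Module.Finite.iff_fg.mpr (homogeneousSubmodule_fg σ R n)

lemma finrank_homogeneousSubmodule_fin_two {R : Type*} [CommRing R] [Nontrivial R] (n : ℕ) :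
    finrank R (homogeneousSubmodule (Fin 2) R n) = n + 1 := by
  let monomialsOfDegree :
      {m : Fin 2 →₀ ℕ | m.degree = n} ≃ Finset.HasAntidiagonal.antidiagonal n :=
    (finTwoArrowEquiv' ℕ).subtypeEquiv fun m => by simp [Finsupp.degree_fin_two]
  calc finrank R (homogeneousSubmodule (Fin 2) R n)
      = finrank R (restrictSupport R {m : Fin 2 →₀ ℕ | m.degree = n}) := by
        rw [homogeneousSubmodule_eq_finsupp_supported]; rfl
    _ = n + 1 := by
      rw [finrank_eq_nat_card_basis (basisRestrictSupport R _), Nat.card_congr monomialsOfDegree,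
        Nat.card_eq_fintype_card, Fintype.card_coe, Finset.Nat.card_antidiagonal]

lemma MvPolynomial.X_add_C_mul_X_pow_eq_sum {R : Type*} [CommSemiring R] (a : R) (m : ℕ) :
    (X 0 + C a * X 1 : MvPolynomial (Fin 2) R) ^ m =
      ∑ j ∈ Finset.range (m + 1), (a ^ j * m.choose j) • (X 0 ^ (m - j) * X 1 ^ j) := by
  rw [add_comm, add_pow]
  refine Finset.sum_congr rfl fun j _ => ?_
  rw [smul_eq_C_mul]
  simp only [map_mul, map_pow, map_natCast, mul_pow]
  ring

lemma pd_apply (i : Fin 2) (f : MvPolynomial (Fin 2) ℂ) : pd i f = pderiv i f := rfl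

lemma diffOp_monomial (m : Fin 2 →₀ ℕ) (a : ℂ) :
    diffOp (monomial m a) = a • (pd 0 ^ m 0 * pd 1 ^ m 1) :=
  AddMonoidAlgebra.lift_single derivMonomialHom m a

lemma apolar_X (i : Fin 2) (P : MvPolynomial (Fin 2) ℂ) : apolar (X i) P = pderiv i P := by
  rw [apolar, X, diffOp_monomial]
  fin_cases i <;> simp [pd_apply]

lemma apolar_C (c : ℂ) (P : MvPolynomial (Fin 2) ℂ) : apolar (C c) P = c • P := by
  rw [apolar, ← algebraMap_eq, diffOp.commutes, Module.algebraMap_end_apply]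

lemma apolar_zero_right (Q : MvPolynomial (Fin 2) ℂ) : apolar Q 0 = 0 := map_zero _

lemma apolar_mul (Q R P : MvPolynomial (Fin 2) ℂ) :
    apolar (Q * R) P = apolar Q (apolar R P) := by
  rw [apolar, map_mul, Module.End.mul_apply]; rfl

lemma coeff_pd_pow (i : Fin 2) (k : ℕ) (f : MvPolynomial (Fin 2) ℂ) (ν : Fin 2 →₀ ℕ) :
    coeff ν ((pd i ^ k) f) = coeff (ν + Finsupp.single i k) f * (ν i + k).descFactorial k := by
  induction k generalizing f ν with
  | zero => simp
  | succ k ih =>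
    rw [pow_succ, Module.End.mul_apply, ih, pd_apply, coeff_pderiv,
      add_assoc, ← Finsupp.single_add, ← add_assoc (ν i), Nat.succ_descFactorial_succ]
    simp only [Finsupp.add_apply, Finsupp.single_eq_same]
    push_cast
    ring

lemma coeff_zero_apolar_monomial (m : Fin 2 →₀ ℕ) (f : MvPolynomial (Fin 2) ℂ) :
    coeff 0 (apolar (monomial m 1) f) = coeff m f * (m 1).factorial * (m 0).factorial := by
  have hm : Finsupp.single 0 (m 0) + Finsupp.single 1 (m 1) = m := by
    ext i; fin_cases i <;> simp
  rw [apolar, diffOp_monomial, one_smul, Module.End.mul_apply, coeff_pd_pow, coeff_pd_pow,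
    zero_add, hm]
  simp [Nat.descFactorial_self]

lemma MvPolynomial.IsHomogeneous.pd_pow {f : MvPolynomial (Fin 2) ℂ} {n : ℕ}
    (hf : f.IsHomogeneous n) (i : Fin 2) (k : ℕ) : ((pd i ^ k) f).IsHomogeneous (n - k) := by
  induction k with
  | zero => simpa
  | succ k ih => rw [pow_succ', Module.End.mul_apply, pd_apply, Nat.sub_succ']; exact ih.pderiv

lemma MvPolynomial.IsHomogeneous.apolar {Q P : MvPolynomial (Fin 2) ℂ} {e l : ℕ}
    (hQ : Q.IsHomogeneous e) (hP : P.IsHomogeneous l) : (apolar Q P).IsHomogeneous (l - e) := by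
  rw [← Q.support_sum_monomial_coeff, ← apolarLM_apply, map_sum]
  refine IsHomogeneous.sum _ _ _ fun m hm => ?_
  have hme : e = m 1 + m 0 := by
    rw [← hQ.degree_eq (mem_support_iff.mp hm), Finsupp.degree_fin_two, add_comm]
  rw [apolarLM_apply, _root_.apolar, diffOp_monomial, LinearMap.smul_apply, Module.End.mul_apply,
    hme, ← Nat.sub_sub, smul_eq_C_mul]
  simpa using ((hP.pd_pow 1 (m 1)).pd_pow 0 (m 0)).C_mul (coeff m Q)

lemma eq_zero_of_forall_coeff_zero_apolar {S : MvPolynomial (Fin 2) ℂ} {k : ℕ}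
    (hS : S.IsHomogeneous k) (h : ∀ R, R.IsHomogeneous k → coeff 0 (apolar R S) = 0) :
    S = 0 := by
  ext m
  by_contra hm
  have hR := h (monomial m 1) (isHomogeneous_monomial 1 (hS.degree_eq hm))
  rw [coeff_zero_apolar_monomial] at hR
  exact mul_ne_zero (mul_ne_zero hm (Nat.cast_ne_zero.mpr (Nat.factorial_ne_zero _)))
    (Nat.cast_ne_zero.mpr (Nat.factorial_ne_zero _)) hR

lemma LinearMap.finrank_range_eq_of_ker_eq {K V W W' : Type*} [Field K] [AddCommGroup V]
    [Module K V] [AddCommGroup W] [Module K W] [AddCommGroup W'] [Module K W']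
    {f : V →ₗ[K] W} {g : V →ₗ[K] W'} (h : LinearMap.ker f = LinearMap.ker g) :
    finrank K (LinearMap.range f) = finrank K (LinearMap.range g) :=
  (f.quotKerEquivRange.symm.trans
    ((Submodule.quotEquivOfEq _ _ h).trans g.quotKerEquivRange)).finrank_eq

lemma LinearMap.finrank_range_flip {K V W : Type*} [Field K] [AddCommGroup V] [Module K V]
    [AddCommGroup W] [Module K W] [FiniteDimensional K W] (B : V →ₗ[K] W →ₗ[K] K) :
    finrank K (LinearMap.range B.flip) = finrank K (LinearMap.range B) := by
  have hrange : LinearMap.range B.flip = LinearMap.range B.dualMap := by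
    rw [show B.flip = B.dualMap ∘ₗ Module.Dual.eval K W from rfl, LinearMap.range_comp,
      ← Module.evalEquiv_toLinearMap, LinearEquiv.range, Submodule.map_top]
  rw [hrange, LinearMap.finrank_range_dualMap_eq_finrank_range]

section Catalecticant

variable (P : MvPolynomial (Fin 2) ℂ)

noncomputable def catalecticant (e : ℕ) : 𝓗 e →ₗ[ℂ] MvPolynomial (Fin 2) ℂ :=
  (apolarLM P).domRestrict (𝓗 e)

lemma catalecticant_apply (e : ℕ) (Q : 𝓗 e) : catalecticant P e Q = apolar Q P := rfl

noncomputable def apolarPairing (d e : ℕ) : 𝓗 d →ₗ[ℂ] 𝓗 e →ₗ[ℂ] ℂ :=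
  ((LinearMap.mul ℂ _).compl₁₂ (𝓗 d).subtype (𝓗 e).subtype).compr₂
    ((lcoeff ℂ 0).comp (apolarLM P))

lemma finrank_range_catalecticant_add_finrank_ker (e : ℕ) :
    finrank ℂ (LinearMap.range (catalecticant P e)) +
      finrank ℂ (LinearMap.ker (catalecticant P e)) = e + 1 := by
  rw [LinearMap.finrank_range_add_finrank_ker, finrank_homogeneousSubmodule_fin_two]

lemma apolarPairing_apply (d e : ℕ) (Q : 𝓗 d) (R : 𝓗 e) :
    apolarPairing P d e Q R = coeff 0 (apolar (Q * R) P) := rfl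

lemma apolarPairing_flip (d e : ℕ) : (apolarPairing P d e).flip = apolarPairing P e d := by
  ext Q R
  simp only [LinearMap.flip_apply, apolarPairing_apply, mul_comm (R : MvPolynomial (Fin 2) ℂ)]

variable {P}

lemma range_catalecticant_le {l : ℕ} (hP : P.IsHomogeneous l) (e : ℕ) :
    LinearMap.range (catalecticant P e) ≤ 𝓗 (l - e) := by
  rintro _ ⟨Q, rfl⟩
  exact Q.2.apolar hP

lemma ker_apolarPairing {l d e : ℕ} (hP : P.IsHomogeneous l) (hde : d + e = l) :
    LinearMap.ker (apolarPairing P d e) = LinearMap.ker (catalecticant P d) := by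
  ext Q
  simp only [LinearMap.mem_ker, catalecticant_apply]
  have hQP : (apolar Q P).IsHomogeneous e := by
    simpa [← hde] using (Q.2 : (Q : MvPolynomial (Fin 2) ℂ).IsHomogeneous d).apolar hP
  constructor
  · intro hQ
    refine eq_zero_of_forall_coeff_zero_apolar hQP fun R hR => ?_
    rw [← apolar_mul, mul_comm]
    exact LinearMap.congr_fun hQ ⟨R, hR⟩
  · intro hQ
    ext R
    rw [apolarPairing_apply, mul_comm, apolar_mul, hQ, apolar_zero_right]
    rfl

theorem finrank_range_catalecticant_symm {l d : ℕ} (hP : P.IsHomogeneous l) (hd : d ≤ l) :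
    finrank ℂ (LinearMap.range (catalecticant P d)) =
      finrank ℂ (LinearMap.range (catalecticant P (l - d))) :=
  calc finrank ℂ (LinearMap.range (catalecticant P d))
      = finrank ℂ (LinearMap.range (apolarPairing P d (l - d))) :=
        LinearMap.finrank_range_eq_of_ker_eq (ker_apolarPairing hP (by omega)).symm
    _ = finrank ℂ (LinearMap.range (apolarPairing P (l - d) d)) := by
        rw [← LinearMap.finrank_range_flip, apolarPairing_flip]
    _ = finrank ℂ (LinearMap.range (catalecticant P (l - d))) :=
        LinearMap.finrank_range_eq_of_ker_eq (ker_apolarPairing hP (by omega))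

end Catalecticant

section MinimalApolarDegree

variable {P : MvPolynomial (Fin 2) ℂ} {l : ℕ}

lemma exists_isHomogeneous_apolar_eq_zero (hP : P.IsHomogeneous l) {e : ℕ} (he : l < 2 * e) :
    ∃ Q, Q ≠ 0 ∧ Q.IsHomogeneous e ∧ apolar Q P = 0 := by
  have hrange := Submodule.finrank_mono (range_catalecticant_le hP e)
  have hsum := finrank_range_catalecticant_add_finrank_ker P e
  rw [finrank_homogeneousSubmodule_fin_two] at hrange
  have hker : LinearMap.ker (catalecticant P e) ≠ ⊥ := fun h => by
    rw [h, finrank_bot] at hsum; omega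
  obtain ⟨Q, hQ, hQ0⟩ := Submodule.exists_mem_ne_zero_of_ne_bot hker
  exact ⟨Q, fun h => hQ0 (Subtype.ext h), Q.2, hQ⟩

lemma d1_le_of_apolar_eq_zero {Q : MvPolynomial (Fin 2) ℂ} {e : ℕ} (hQ0 : Q ≠ 0)
    (hQ : Q.IsHomogeneous e) (hQP : apolar Q P = 0) : d1 P ≤ e :=
  Nat.sInf_le ⟨Q, hQ0, hQ, hQP⟩

lemma d1_le (hP : P.IsHomogeneous l) : d1 P ≤ l / 2 + 1 := by
  obtain ⟨Q, hQ0, hQ, hQP⟩ := exists_isHomogeneous_apolar_eq_zero hP (e := l / 2 + 1) (by omega)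
  exact d1_le_of_apolar_eq_zero hQ0 hQ hQP

lemma exists_isHomogeneous_d1 (hP : P.IsHomogeneous l) :
    ∃ Q, Q ≠ 0 ∧ Q.IsHomogeneous (d1 P) ∧ apolar Q P = 0 :=
  Nat.sInf_mem (s := {d | ∃ Q, Q ≠ 0 ∧ Q.IsHomogeneous d ∧ apolar Q P = 0})
    ⟨_, exists_isHomogeneous_apolar_eq_zero hP (e := l / 2 + 1) (by omega)⟩

lemma d1_pos (hP : P.IsHomogeneous l) (hP0 : P ≠ 0) : 0 < d1 P := by
  obtain ⟨Q, hQ0, hQ, hQP⟩ := exists_isHomogeneous_d1 hP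
  refine Nat.pos_of_ne_zero fun h => hQ0 ?_
  rw [h, ← totalDegree_zero_iff_isHomogeneous, totalDegree_eq_zero_iff_eq_C] at hQ
  rw [hQ, apolar_C, smul_eq_zero] at hQP
  rw [hQ, hQP.resolve_right hP0, map_zero]

lemma finrank_range_catalecticant_of_lt_d1 {e : ℕ} (he : e < d1 P) :
    finrank ℂ (LinearMap.range (catalecticant P e)) = e + 1 := by
  rw [LinearMap.finrank_range_of_inj, finrank_homogeneousSubmodule_fin_two]
  refine (injective_iff_map_eq_zero _).mpr fun Q hQ => ?_
  by_contra hQ0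
  exact he.not_ge (d1_le_of_apolar_eq_zero (by simpa using hQ0) Q.2 hQ)

lemma finrank_range_catalecticant_le_d1 (hP : P.IsHomogeneous l) {e : ℕ} (he : d1 P ≤ e) :
    finrank ℂ (LinearMap.range (catalecticant P e)) ≤ d1 P := by
  obtain ⟨Q₁, hQ₁0, hQ₁, hQ₁P⟩ := exists_isHomogeneous_d1 hP
  let μ : 𝓗 (e - d1 P) →ₗ[ℂ] 𝓗 e := (LinearMap.mulLeft ℂ Q₁).restrict fun Q hQ => by
    simpa [Nat.add_sub_cancel' he] using hQ₁.mul hQ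
  have hμ : Function.Injective μ := fun Q R h =>
    Subtype.ext (mul_left_cancel₀ hQ₁0 (congrArg Subtype.val h))
  have hμker : LinearMap.range μ ≤ LinearMap.ker (catalecticant P e) := by
    rintro _ ⟨Q, rfl⟩
    rw [LinearMap.mem_ker, catalecticant_apply]
    change apolar (Q₁ * Q) P = 0
    rw [mul_comm, apolar_mul, hQ₁P, apolar_zero_right]
  have hker := Submodule.finrank_mono hμker
  have hsum := finrank_range_catalecticant_add_finrank_ker P e
  rw [LinearMap.finrank_range_of_inj hμ, finrank_homogeneousSubmodule_fin_two] at hker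
  omega

end MinimalApolarDegree

section LinearForms

lemma apolar_C_mul_X_sub_X (a : ℂ) (S : MvPolynomial (Fin 2) ℂ) :
    apolar (C a * X 0 - X 1) S = a • pderiv 0 S - pderiv 1 S := by
  rw [C_mul', apolar, map_sub, map_smul, LinearMap.sub_apply, LinearMap.smul_apply, ← apolar,
    ← apolar, apolar_X, apolar_X]

lemma apolar_C_mul_X_sub_X_pow (a : ℂ) (m : ℕ) :
    apolar (C a * X 0 - X 1) ((X 0 + C a * X 1) ^ m) = 0 := by
  simp only [apolar_C_mul_X_sub_X, pderiv_pow, map_add, pderiv_X_self, pderiv_C_mul, pderiv_X,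
    smul_eq_C_mul]
  simp
  ring

lemma eq_zero_of_apolar_C_mul_X_sub_X {a : ℂ} {m : ℕ} {S : MvPolynomial (Fin 2) ℂ}
    (hS : S.IsHomogeneous m) (hLS : apolar (C a * X 0 - X 1) S = 0)
    (htop : coeff (Finsupp.single 0 m) S = 0) : S = 0 := by
  have hcoeff :
      ∀ j ≤ m, coeff (Finsupp.single (0 : Fin 2) (m - j) + Finsupp.single 1 j) S = 0 := by
    intro j
    induction j with
    | zero => simpa using htop
    | succ j ih =>
      intro hj
      set ν := Finsupp.single (0 : Fin 2) (m - (j + 1)) + Finsupp.single 1 j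
      have h := congrArg (coeff ν) hLS
      have h0 : ν + Finsupp.single 0 1 = Finsupp.single 0 (m - j) + Finsupp.single 1 j := by
        ext i; fin_cases i <;> simp [ν]; omega
      have h1 :
          ν + Finsupp.single 1 1 = Finsupp.single 0 (m - (j + 1)) + Finsupp.single 1 (j + 1) := by
        ext i; fin_cases i <;> simp [ν]
      rw [apolar_C_mul_X_sub_X, coeff_sub, coeff_smul, coeff_pderiv, coeff_pderiv, h0, h1,
        ih (by omega), coeff_zero] at h
      simpa [Nat.cast_add_one_ne_zero] using h
  ext d
  rw [coeff_zero]
  by_cases hd : d.degree = m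
  · rw [Finsupp.degree_fin_two] at hd
    convert hcoeff (d 1) (by omega)
    ext i; fin_cases i <;> simp; omega
  · exact hS.coeff_eq_zero hd

lemma exists_eq_smul_of_apolar_C_mul_X_sub_X {a : ℂ} {m : ℕ} {S T : MvPolynomial (Fin 2) ℂ}
    (hS : S.IsHomogeneous m) (hT : T.IsHomogeneous m) (hLS : apolar (C a * X 0 - X 1) S = 0)
    (hLT : apolar (C a * X 0 - X 1) T = 0) (hT0 : T ≠ 0) : ∃ c : ℂ, S = c • T := by
  have htop : coeff (Finsupp.single 0 m) T ≠ 0 := fun h =>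
    hT0 (eq_zero_of_apolar_C_mul_X_sub_X hT hLT h)
  refine ⟨coeff (Finsupp.single 0 m) S / coeff (Finsupp.single 0 m) T, sub_eq_zero.mp ?_⟩
  refine eq_zero_of_apolar_C_mul_X_sub_X (a := a) (hS.sub ?_) ?_ ?_
  · rw [smul_eq_C_mul]; simpa using hT.C_mul _
  · rw [apolar, map_sub, map_smul, ← apolar, ← apolar, hLS, hLT, smul_zero, sub_zero]
  · rw [coeff_sub, coeff_smul, smul_eq_mul, div_mul_cancel₀ _ htop, sub_self]

lemma exists_X_add_C_mul_X_pow_notMem {m : ℕ} {V : Submodule ℂ (MvPolynomial (Fin 2) ℂ)}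
    (hV : V < 𝓗 m) : ∃ a : ℂ, (X 0 + C a * X 1) ^ m ∉ V := by
  obtain ⟨x, hx, hxV⟩ := SetLike.exists_of_lt hV
  obtain ⟨f, hfx, hfV⟩ := Submodule.exists_dual_map_eq_bot_of_notMem hxV inferInstance
  obtain ⟨d, hd, hfd⟩ : ∃ d ∈ x.support, f (monomial d 1) ≠ 0 := by
    rw [x.as_sum, map_sum] at hfx
    obtain ⟨d, hd, h⟩ := Finset.exists_ne_zero_of_sum_ne_zero hfx
    refine ⟨d, hd, fun h' => h ?_⟩
    rw [← mul_one (coeff d x), ← smul_eq_mul, ← smul_monomial, map_smul, h', smul_zero]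
  have hdm : d 0 + d 1 = m := by
    rw [← Finsupp.degree_fin_two]; exact hx.degree_eq (mem_support_iff.mp hd)
  let q : Polynomial ℂ := ∑ j ∈ Finset.range (m + 1),
    Polynomial.monomial j (m.choose j * f (X 0 ^ (m - j) * X 1 ^ j))
  have hq : q ≠ 0 := fun hq => by
    have h := congrArg (Polynomial.coeff · (d 1)) hq
    simp only [q, Polynomial.finsetSum_coeff, Polynomial.coeff_monomial, Polynomial.coeff_zero,
      Finset.sum_ite_eq', Finset.mem_range] at h
    rw [if_pos (by omega), show m - d 1 = d 0 by omega, mul_eq_zero, Nat.cast_eq_zero] at h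
    rw [monomial_fin_two, C_1, one_mul] at hfd
    exact h.elim (Nat.choose_pos (by omega)).ne' hfd
  obtain ⟨a, ha⟩ : ∃ a, q.eval a ≠ 0 := by
    by_contra! h
    exact hq (Polynomial.funext fun a => by simp [h a])
  refine ⟨a, fun hmem => ha ?_⟩
  have h : f ((X 0 + C a * X 1) ^ m) = 0 := by
    rw [← Submodule.mem_bot ℂ, ← hfV]; exact Submodule.mem_map_of_mem hmem
  rw [X_add_C_mul_X_pow_eq_sum, map_sum] at h
  simp only [q, Polynomial.eval_finsetSum, Polynomial.eval_monomial, map_smul, smul_eq_mul] at h ⊢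
  rw [← h]
  exact Finset.sum_congr rfl fun j _ => by ring

end LinearForms

section HilbertFunction

variable {P : MvPolynomial (Fin 2) ℂ} {l : ℕ}

lemma finrank_range_catalecticant_le_succ (hP : P.IsHomogeneous l) {e : ℕ} (he : e < l - e) :
    finrank ℂ (LinearMap.range (catalecticant P e)) ≤
      finrank ℂ (LinearMap.range (catalecticant P (e + 1))) := by
  have hVe := LinearMap.finrank_range_le (catalecticant P e)
  set V := LinearMap.range (catalecticant P e)
  have hV : V < 𝓗 (l - e) := by
    refine lt_of_le_of_ne (range_catalecticant_le hP e) fun h => ?_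
    rw [h, finrank_homogeneousSubmodule_fin_two, finrank_homogeneousSubmodule_fin_two] at hVe
    omega
  obtain ⟨a, ha⟩ := exists_X_add_C_mul_X_pow_notMem hV
  have hN : ((X 0 + C a * X 1 : MvPolynomial (Fin 2) ℂ) ^ (l - e)).IsHomogeneous (l - e) := by
    simpa using ((isHomogeneous_X ℂ 0).add (isHomogeneous_C_mul_X a 1)).pow (l - e)
  have hN0 : (X 0 + C a * X 1 : MvPolynomial (Fin 2) ℂ) ^ (l - e) ≠ 0 :=
    pow_ne_zero _ fun h =>
      one_ne_zero (α := MvPolynomial (Fin 2) ℂ) (by simpa using congrArg (pderiv 0) h)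
  have hinj : Function.Injective (diffOp (C a * X 0 - X 1) ∘ₗ V.subtype) := by
    refine (injective_iff_map_eq_zero _).mpr fun ⟨S, hSV⟩ hS => Subtype.ext ?_
    obtain ⟨c, rfl⟩ := exists_eq_smul_of_apolar_C_mul_X_sub_X
      (range_catalecticant_le hP e hSV) hN hS (apolar_C_mul_X_sub_X_pow a (l - e)) hN0
    by_cases hc : c = 0
    · simp [hc]
    · exact absurd (by simpa [hc] using V.smul_mem c⁻¹ hSV) ha
  have hrange : LinearMap.range (diffOp (C a * X 0 - X 1) ∘ₗ V.subtype) ≤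
      LinearMap.range (catalecticant P (e + 1)) := by
    rintro _ ⟨⟨_, Q, rfl⟩, rfl⟩
    have hLQ : (C a * X 0 - X 1) * (Q : MvPolynomial (Fin 2) ℂ) ∈ 𝓗 (e + 1) := by
      simpa [add_comm] using ((isHomogeneous_C_mul_X a 0).sub (isHomogeneous_X ℂ 1)).mul Q.2
    exact ⟨⟨_, hLQ⟩, by rw [catalecticant_apply, apolar_mul]; rfl⟩
  calc finrank ℂ V
      = finrank ℂ (LinearMap.range (diffOp (C a * X 0 - X 1) ∘ₗ V.subtype)) :=
        (LinearMap.finrank_range_of_inj hinj).symm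
    _ ≤ _ := Submodule.finrank_mono hrange

theorem finrank_range_catalecticant_eq_min (hP : P.IsHomogeneous l) (hP0 : P ≠ 0) {e : ℕ}
    (he : 2 * e ≤ l + 1) :
    finrank ℂ (LinearMap.range (catalecticant P e)) = min (e + 1) (d1 P) := by
  rcases lt_or_ge e (d1 P) with hlt | hge
  · rw [finrank_range_catalecticant_of_lt_d1 hlt]
    omega
  have hbase : finrank ℂ (LinearMap.range (catalecticant P (d1 P - 1))) = d1 P := by
    have := d1_pos hP hP0
    rw [finrank_range_catalecticant_of_lt_d1 (by omega)]
    omega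
  have hmono : ∀ k, d1 P - 1 ≤ k → k ≤ e →
      d1 P ≤ finrank ℂ (LinearMap.range (catalecticant P k)) := by
    intro k hk
    induction k, hk using Nat.le_induction with
    | base => exact fun _ => hbase.ge
    | succ k _ ih =>
      exact fun hke => (ih (by omega)).trans (finrank_range_catalecticant_le_succ hP (by omega))
  have := hmono e (by omega) le_rfl
  have := finrank_range_catalecticant_le_d1 hP hge
  omega

lemma finrank_apolarCoker_add_finrank_range (hP : P.IsHomogeneous l) (d : ℕ) :
    finrank ℂ (ApolarCoker P l d) + finrank ℂ (LinearMap.range (catalecticant P d)) =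
      l - d + 1 := by
  rw [← finrank_homogeneousSubmodule_fin_two (R := ℂ) (l - d),
    ← Submodule.finrank_quotient_add_finrank (apolarImage P l d)]
  have hImage : apolarImage P l d =
      (LinearMap.range (catalecticant P d)).comap (𝓗 (l - d)).subtype := by
    rw [catalecticant, LinearMap.range_domRestrict]; rfl
  have hfinrank :
      finrank ℂ (apolarImage P l d) = finrank ℂ (LinearMap.range (catalecticant P d)) := by
    rw [hImage]; exact (Submodule.comapSubtypeEquivOfLe (range_catalecticant_le hP d)).finrank_eq
  rw [hfinrank]

theorem finrank_apolarCoker (hP : P.IsHomogeneous l) (hP0 : P ≠ 0) {d : ℕ} (hd : l / 2 ≤ d)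
    (hdl : d ≤ l) : finrank ℂ (ApolarCoker P l d) = l - d + 1 - d1 P := by
  have h := finrank_apolarCoker_add_finrank_range hP d
  rw [finrank_range_catalecticant_symm hP hdl,
    finrank_range_catalecticant_eq_min hP hP0 (by omega)] at h
  omega

end HilbertFunction

/-- Comparison of the level sets `P^l_{d,s}` of `P ↦ dim C_P^d` with the strata `P^l_r` of
the `d₁`-stratification (case `⌊l/2⌋ ≤ d ≤ l`). -/
theorem level_sets_large_d (l d s : ℕ) (hd : l / 2 ≤ d) (hdl : d ≤ l) :
    (0 < s → s ≤ l - d →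
      {P : MvPolynomial (Fin 2) ℂ | P.IsHomogeneous l ∧ P ≠ 0 ∧
          Module.finrank ℂ (ApolarCoker P l d) = s}
        = {P : MvPolynomial (Fin 2) ℂ | P.IsHomogeneous l ∧ P ≠ 0 ∧
            d1 P = l - d + 1 - s}) ∧
    (s = 0 →
      {P : MvPolynomial (Fin 2) ℂ | P.IsHomogeneous l ∧ P ≠ 0 ∧
          Module.finrank ℂ (ApolarCoker P l d) = s}
        = ⋃ r ∈ Set.Icc (l - d + 1) (l / 2 + 1),
            {P : MvPolynomial (Fin 2) ℂ | P.IsHomogeneous l ∧ P ≠ 0 ∧ d1 P = r}) ∧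
    (l - d < s →
      {P : MvPolynomial (Fin 2) ℂ | P.IsHomogeneous l ∧ P ≠ 0 ∧
          Module.finrank ℂ (ApolarCoker P l d) = s} = ∅) := by
  have key : ∀ P : MvPolynomial (Fin 2) ℂ, P.IsHomogeneous l → P ≠ 0 →
      finrank ℂ (ApolarCoker P l d) = l - d + 1 - d1 P ∧ 0 < d1 P ∧ d1 P ≤ l / 2 + 1 :=
    fun P hP hP0 => ⟨finrank_apolarCoker hP hP0 hd hdl, d1_pos hP hP0, d1_le hP⟩
  refine ⟨fun hs hsd => ?_, fun hs => ?_, fun hs => ?_⟩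
  · ext P
    simp only [Set.mem_ofPred_eq]
    refine and_congr_right fun hP => and_congr_right fun hP0 => ?_
    have := key P hP hP0
    omega
  · ext P
    simp only [Set.mem_ofPred_eq, Set.mem_iUnion, Set.mem_Icc, exists_prop]
    constructor
    · rintro ⟨hP, hP0, hs'⟩
      have := key P hP hP0
      exact ⟨d1 P, ⟨by omega, this.2.2⟩, hP, hP0, rfl⟩
    · rintro ⟨r, hr, hP, hP0, rfl⟩
      have := key P hP hP0
      exact ⟨hP, hP0, by omega⟩
  · refine Set.eq_empty_of_forall_notMem fun P ⟨hP, hP0, hP'⟩ => ?_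
    have := key P hP hP0
    omega
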